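/- arXiv:math/0204028 — 4 statements merged into one kernel-verified Lean document; each statement's English description precedes it below -/
import Mathlib

section
/- Let α_e ∈ ℝ and let p̂_e = β⁻¹({(α_e k, 0)}) ⊆ P̂. Suppose p̂_e is stable for the blown-up dynamics, in the sense that for every open neighborhood Û of p̂_e in P̂ there exists an open neighborhood V̂ of p̂_e in P̂ such that every solution t ↦ (w(t),ẇ(t)) of (8) (with its fixed parameters a ≥ 0, γ ∈ ℝ) whose initial point satisfies (w(0),ẇ(0),a,γ) ∈ V̂ has (w(t),ẇ(t),a,γ) ∈ Û for all t ≥ 0. Then (α_e k, 0) is a Lyapunov stable equilibrium of (60): for every neighborhood U of (α_e k, 0) in ℝ³×ℝ³ there is a neighborhood V of (α_e k, 0) such that every solution of (60) starting in V remains in U for all t ≥ 0. -/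
noncomputable section

open scoped RealInnerProductSpace

/-- ℝ³ with the standard (Euclidean) inner product and norm. -/
abbrev E3 : Type := EuclideanSpace ℝ (Fin 3)

/-- Build a vector of `E3` from its three coordinates. -/
def vec3 (x y z : ℝ) : E3 := (WithLp.equiv 2 (Fin 3 → ℝ)).symm ![x, y, z]

/-- The standard cross product on ℝ³. -/
def cross3 (u v : E3) : E3 :=
  vec3 (u 1 * v 2 - u 2 * v 1) (u 2 * v 0 - u 0 * v 2) (u 0 * v 1 - u 1 * v 0)

/-- The vertical unit vector k = (0,0,1). -/
def kvec : E3 := vec3 0 0 1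

/-- 𝐈⁻¹ u = (u₁/I₁, u₂/I₂, u₃/I₃). -/
def Iinv (I1 I2 I3 : ℝ) (u : E3) : E3 := vec3 (u 0 / I1) (u 1 / I2) (u 2 / I3)

/-- 𝐌⁻¹ u = (u₁/M₁, u₂/M₂, u₃/M₃). -/
def Minv (M1 M2 M3 : ℝ) (u : E3) : E3 := vec3 (u 0 / M1) (u 1 / M2) (u 2 / M3)

/-- `(pm, pv) : ℝ → ℝ³ × ℝ³` is a (global) solution of the underwater-vehicle
Poisson system (60): dπ/dt = π×(𝐈⁻¹π) + p×(𝐌⁻¹p), dp/dt = p×(𝐈⁻¹π). -/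
def IsSol60 (I1 I2 I3 M1 M2 M3 : ℝ) (pm pv : ℝ → E3) : Prop :=
  (∀ t : ℝ, HasDerivAt pm
      (cross3 (pm t) (Iinv I1 I2 I3 (pm t)) + cross3 (pv t) (Minv M1 M2 M3 (pv t))) t) ∧
  (∀ t : ℝ, HasDerivAt pv (cross3 (pv t) (Iinv I1 I2 I3 (pm t))) t)

/-- Solution of (60) on a subset `J ⊆ ℝ`. -/
def IsSol60On (I1 I2 I3 M1 M2 M3 : ℝ) (J : Set ℝ) (pm pv : ℝ → E3) : Prop :=
  (∀ t ∈ J, HasDerivWithinAt pm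
      (cross3 (pm t) (Iinv I1 I2 I3 (pm t)) + cross3 (pv t) (Minv M1 M2 M3 (pv t))) J t) ∧
  (∀ t ∈ J, HasDerivWithinAt pv (cross3 (pv t) (Iinv I1 I2 I3 (pm t))) J t)

/-- The blown-up space P̂ = {(w,ẇ,a,γ) : ‖w‖ = 1, w·ẇ = 0, a ≥ 0} ⊆ ℝ³×ℝ³×ℝ×ℝ. -/
def Phat : Set (E3 × E3 × ℝ × ℝ) :=
  {x | ‖x.1‖ = 1 ∧ ⟪x.1, x.2.1⟫ = 0 ∧ 0 ≤ x.2.2.1}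

/-- The blow-down map β(w,ẇ,a,γ) = (ẇ + γw, aw). -/
def blowdown (x : E3 × E3 × ℝ × ℝ) : E3 × E3 :=
  (x.2.1 + x.2.2.2 • x.1, x.2.2.1 • x.1)

/-- `(w, dw) : ℝ → ℝ³ × ℝ³` is a (global) solution of the blown-up dynamics (8)
with fixed parameters `a`, `γ`:
dw/dt = w×(𝐈⁻¹(ẇ+γw)), dẇ/dt = ẇ×(𝐈⁻¹(ẇ+γw)) + a² w×(𝐌⁻¹w). -/
def IsSol8 (I1 I2 I3 M1 M2 M3 a γ : ℝ) (w dw : ℝ → E3) : Prop :=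
  (∀ t : ℝ, HasDerivAt w (cross3 (w t) (Iinv I1 I2 I3 (dw t + γ • w t))) t) ∧
  (∀ t : ℝ, HasDerivAt dw
      (cross3 (dw t) (Iinv I1 I2 I3 (dw t + γ • w t))
        + a ^ 2 • cross3 (w t) (Minv M1 M2 M3 (w t))) t)

/-- Solution of (8) on a subset `J ⊆ ℝ`. -/
def IsSol8On (I1 I2 I3 M1 M2 M3 a γ : ℝ) (J : Set ℝ) (w dw : ℝ → E3) : Prop :=
  (∀ t ∈ J, HasDerivWithinAt w (cross3 (w t) (Iinv I1 I2 I3 (dw t + γ • w t))) J t) ∧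
  (∀ t ∈ J, HasDerivWithinAt dw
      (cross3 (dw t) (Iinv I1 I2 I3 (dw t + γ • w t))
        + a ^ 2 • cross3 (w t) (Minv M1 M2 M3 (w t))) J t)

/-
A solution `(π, p)` of (60) is the blow-down of a solution of (8). If `p(0) ≠ 0` take
`a = ‖p(0)‖` and `w = p / a`; otherwise `p ≡ 0` (since `‖p‖` is conserved), `a = 0`, and `w` is
`π / ‖π(0)‖`, or the constant `k` when `π ≡ 0` as well. In every case `w' = w × 𝐈⁻¹π`, so
`(w, π - γ w)` solves (8) for every constant `γ`, and `γ = π(0)·w(0)` puts its initial point in `P̂`.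
That initial point `(w, π - (π·w) w, ‖p‖, π·w)` depends continuously on `(π, p)` and, over the
equilibrium, sweeps out `p̂_e` as `w` runs over the unit sphere. By compactness of the sphere
(the tube lemma) the stable neighbourhood `V̂` of `p̂_e` therefore contains the lifts of all
points of a neighbourhood of `(α_e k, 0)`.
-/

open Metric Topology

lemma cross3_smul_left (c : ℝ) (u v : E3) : cross3 (c • u) v = c • cross3 u v := by
  ext i; fin_cases i <;> simp [cross3, vec3] <;> ring

lemma cross3_smul_right (c : ℝ) (u v : E3) : cross3 u (c • v) = c • cross3 u v := by
  ext i; fin_cases i <;> simp [cross3, vec3] <;> ring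

lemma cross3_sub_left (u v w : E3) : cross3 (u - v) w = cross3 u w - cross3 v w := by
  ext i; fin_cases i <;> simp [cross3, vec3] <;> ring

lemma cross3_zero_left (v : E3) : cross3 0 v = 0 := by
  ext i; fin_cases i <;> simp [cross3, vec3]

lemma cross3_zero_right (u : E3) : cross3 u 0 = 0 := by
  ext i; fin_cases i <;> simp [cross3, vec3]

lemma inner_self_cross3 (u v : E3) : ⟪u, cross3 u v⟫ = 0 := by
  simp [PiLp.inner_apply, cross3, vec3, Fin.sum_univ_three]; ring

lemma Iinv_zero (I1 I2 I3 : ℝ) : Iinv I1 I2 I3 0 = 0 := by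
  ext i; fin_cases i <;> simp [Iinv, vec3]

lemma Minv_smul (M1 M2 M3 c : ℝ) (u : E3) : Minv M1 M2 M3 (c • u) = c • Minv M1 M2 M3 u := by
  ext i; fin_cases i <;> simp [Minv, vec3] <;> ring

lemma norm_kvec : ‖kvec‖ = 1 := by
  simp [EuclideanSpace.norm_eq, kvec, vec3, Fin.sum_univ_three]

lemma continuous_blowdown : Continuous blowdown := by
  unfold blowdown; fun_prop

section RotationFlow

variable {f g : ℝ → E3}

lemma norm_eq_of_hasDerivAt_cross3 (hf : ∀ t, HasDerivAt f (cross3 (f t) (g t)) t) (t : ℝ) :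
    ‖f t‖ = ‖f 0‖ := by
  have hsq : ∀ s, HasDerivAt (‖f ·‖ ^ 2) 0 s := fun s => by
    simpa [inner_self_cross3] using (hf s).norm_sq
  exact (pow_left_inj₀ (norm_nonneg _) (norm_nonneg _) two_ne_zero).1 <|
    is_const_of_deriv_eq_zero (fun s => (hsq s).differentiableAt) (fun s => (hsq s).deriv) t 0

lemma eq_zero_of_hasDerivAt_cross3 (hf : ∀ t, HasDerivAt f (cross3 (f t) (g t)) t)
    (h0 : f 0 = 0) (t : ℝ) : f t = 0 := by
  simpa [h0] using norm_eq_of_hasDerivAt_cross3 hf t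

lemma exists_unit_of_hasDerivAt_cross3 (hf : ∀ t, HasDerivAt f (cross3 (f t) (g t)) t)
    (h0 : f 0 ≠ 0) :
    ∃ w : ℝ → E3, ‖w 0‖ = 1 ∧ (∀ t, f t = ‖f 0‖ • w t) ∧
      ∀ t, HasDerivAt w (cross3 (w t) (g t)) t := by
  have hc : ‖f 0‖ ≠ 0 := norm_ne_zero_iff.2 h0
  refine ⟨fun t => ‖f 0‖⁻¹ • f t, ?_, fun t => ?_, fun t => ?_⟩
  · simp [norm_smul, hc]
  · simp [smul_smul, hc]
  · exact ((hf t).const_smul _).congr_deriv (cross3_smul_left _ _ _).symm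

end RotationFlow

section Lift

variable {I1 I2 I3 M1 M2 M3 : ℝ} {pm pv : ℝ → E3}

lemma IsSol60.exists_unit_lift (hsol : IsSol60 I1 I2 I3 M1 M2 M3 pm pv) :
    ∃ w : ℝ → E3, ‖w 0‖ = 1 ∧ (∀ t, pv t = ‖pv 0‖ • w t) ∧
      ∀ t, HasDerivAt w (cross3 (w t) (Iinv I1 I2 I3 (pm t))) t := by
  by_cases hpv0 : pv 0 = 0
  · have hpv : ∀ t, pv t = 0 := eq_zero_of_hasDerivAt_cross3 hsol.2 hpv0
    have hpm : ∀ t, HasDerivAt pm (cross3 (pm t) (Iinv I1 I2 I3 (pm t))) t := fun t => by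
      simpa [hpv t, cross3_zero_left] using hsol.1 t
    by_cases hpm0 : pm 0 = 0
    · refine ⟨fun _ => kvec, norm_kvec, fun t => by simp [hpv], fun t => ?_⟩
      simpa [eq_zero_of_hasDerivAt_cross3 hpm hpm0 t, Iinv_zero, cross3_zero_right]
        using hasDerivAt_const t kvec
    · obtain ⟨w, hw1, -, hw⟩ := exists_unit_of_hasDerivAt_cross3 hpm hpm0
      exact ⟨w, hw1, fun t => by simp [hpv], hw⟩
  · exact exists_unit_of_hasDerivAt_cross3 hsol.2 hpv0

lemma IsSol60.isSol8 {a γ : ℝ} {w : ℝ → E3} (hsol : IsSol60 I1 I2 I3 M1 M2 M3 pm pv)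
    (hw : ∀ t, HasDerivAt w (cross3 (w t) (Iinv I1 I2 I3 (pm t))) t)
    (hpv : ∀ t, pv t = a • w t) :
    IsSol8 I1 I2 I3 M1 M2 M3 a γ w (fun t => pm t - γ • w t) := by
  refine ⟨fun t => by simpa using hw t,
    fun t => ((hsol.1 t).sub ((hw t).const_smul γ)).congr_deriv ?_⟩
  simp only [sub_add_cancel, hpv, cross3_sub_left, cross3_smul_left, Minv_smul,
    cross3_smul_right, smul_smul, sq]
  abel

end Lift

def blowupLift (w : E3) (x : E3 × E3) : E3 × E3 × ℝ × ℝ :=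
  (w, x.1 - ⟪x.1, w⟫ • w, ‖x.2‖, ⟪x.1, w⟫)

lemma blowupLift_mem_Phat {w : E3} (hw : ‖w‖ = 1) (x : E3 × E3) : blowupLift w x ∈ Phat := by
  refine ⟨hw, ?_, norm_nonneg _⟩
  simp [blowupLift, inner_sub_right, real_inner_smul_right, hw, real_inner_comm]

lemma blowdown_blowupLift (w : E3) (x : E3 × E3) :
    blowdown (blowupLift w x) = (x.1, ‖x.2‖ • w) := by
  simp [blowdown, blowupLift]

lemma eventually_forall_sphere_blowupLift_mem {αe : ℝ} {V : Set (E3 × E3 × ℝ × ℝ)}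
    (hV : IsOpen V) (hsub : {x ∈ Phat | blowdown x = (αe • kvec, 0)} ⊆ V) :
    ∀ᶠ x in 𝓝 ((αe • kvec, 0) : E3 × E3), ∀ w ∈ sphere (0 : E3) 1, blowupLift w x ∈ V := by
  refine (isCompact_sphere 0 1).eventually_forall_of_forall_eventually fun w hw => ?_
  have hcont : Continuous fun z : (E3 × E3) × E3 => blowupLift z.2 z.1 := by
    unfold blowupLift; fun_prop
  refine hcont.continuousAt.eventually_mem (hV.mem_nhds (hsub ⟨?_, ?_⟩))
  · exact blowupLift_mem_Phat (by simpa using hw) _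
  · simp [blowdown_blowupLift]

theorem statement1_general (I1 I2 I3 M1 M2 M3 : ℝ) (αe : ℝ)
    (phat_e : Set (E3 × E3 × ℝ × ℝ))
    (hphat_e : phat_e = {x ∈ Phat | blowdown x = (αe • kvec, 0)})
    (hstab : ∀ Uhat : Set (E3 × E3 × ℝ × ℝ),
      (∃ U0, IsOpen U0 ∧ Uhat = U0 ∩ Phat) → phat_e ⊆ Uhat →
      ∃ Vhat : Set (E3 × E3 × ℝ × ℝ),
        (∃ V0, IsOpen V0 ∧ Vhat = V0 ∩ Phat) ∧ phat_e ⊆ Vhat ∧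
        ∀ (a γ : ℝ), 0 ≤ a → ∀ w dw : ℝ → E3,
          IsSol8 I1 I2 I3 M1 M2 M3 a γ w dw →
          (w 0, dw 0, a, γ) ∈ Vhat →
          ∀ t ≥ 0, (w t, dw t, a, γ) ∈ Uhat) :
    ∀ U ∈ nhds ((αe • kvec, 0) : E3 × E3),
      ∃ V ∈ nhds ((αe • kvec, 0) : E3 × E3),
        ∀ pm pv : ℝ → E3, IsSol60 I1 I2 I3 M1 M2 M3 pm pv →
          (pm 0, pv 0) ∈ V → ∀ t ≥ 0, (pm t, pv t) ∈ U := by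
  subst hphat_e
  intro U hU
  obtain ⟨Vhat, ⟨V0, hV0, rfl⟩, hpV, hflow⟩ := hstab (blowdown ⁻¹' interior U ∩ Phat)
    ⟨_, isOpen_interior.preimage continuous_blowdown, rfl⟩
    fun x hx => ⟨by simpa [hx.2] using mem_interior_iff_mem_nhds.2 hU, hx.1⟩
  refine ⟨_, eventually_forall_sphere_blowupLift_mem hV0 fun x hx => (hpV hx).1, ?_⟩
  intro pm pv hsol h0 t ht
  obtain ⟨w, hw1, hpv, hw⟩ := hsol.exists_unit_lift
  have hlift := hflow ‖pv 0‖ ⟪pm 0, w 0⟫ (norm_nonneg _) w _ (hsol.isSol8 hw hpv)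
    ⟨h0 (w 0) (by simpa using hw1), blowupLift_mem_Phat hw1 (pm 0, pv 0)⟩ t ht
  simpa [blowdown, ← hpv t] using interior_subset hlift.1

/-- if the blown-up set p̂_e = β⁻¹({(α_e k, 0)}) is stable for the
blown-up dynamics (8) (neighborhoods taken in the subspace topology of P̂),
then (α_e k, 0) is a Lyapunov stable equilibrium of (60). -/
theorem statement1 (I1 I2 I3 M1 M2 M3 : ℝ)
    (hI1 : 0 < I1) (hI2 : 0 < I2) (hI3 : 0 < I3)
    (hM1 : 0 < M1) (hM2 : 0 < M2) (hM3 : 0 < M3) (αe : ℝ)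
    (phat_e : Set (E3 × E3 × ℝ × ℝ))
    (hphat_e : phat_e = {x ∈ Phat | blowdown x = (αe • kvec, 0)})
    (hstab : ∀ Uhat : Set (E3 × E3 × ℝ × ℝ),
      (∃ U0, IsOpen U0 ∧ Uhat = U0 ∩ Phat) → phat_e ⊆ Uhat →
      ∃ Vhat : Set (E3 × E3 × ℝ × ℝ),
        (∃ V0, IsOpen V0 ∧ Vhat = V0 ∩ Phat) ∧ phat_e ⊆ Vhat ∧
        ∀ (a γ : ℝ), 0 ≤ a → ∀ w dw : ℝ → E3,
          IsSol8 I1 I2 I3 M1 M2 M3 a γ w dw →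
          (w 0, dw 0, a, γ) ∈ Vhat →
          ∀ t ≥ 0, (w t, dw t, a, γ) ∈ Uhat) :
    ∀ U ∈ nhds ((αe • kvec, 0) : E3 × E3),
      ∃ V ∈ nhds ((αe • kvec, 0) : E3 × E3),
        ∀ pm pv : ℝ → E3, IsSol60 I1 I2 I3 M1 M2 M3 pm pv →
          (pm 0, pv 0) ∈ V → ∀ t ≥ 0, (pm t, pv t) ∈ U :=
  statement1_general I1 I2 I3 M1 M2 M3 αe phat_e hphat_e hstab
end
end

section
/- For every π₀ ∈ ℝ³, the map w ↦ (w, π₀ − (π₀·w)w, 0, π₀·w) is a bijection from the unit sphere S² = {w ∈ ℝ³ : ‖w‖ = 1} onto the fiber β⁻¹({(π₀, 0)}) ⊆ P̂; i.e. the blow-up of the point (π,p) = (π₀,0) is a two-sphere. Moreover, for c ∈ ℝ, the fiber β⁻¹({(π₀,0)}) contains a point with γ-coordinate equal to c if and only if |c| ≤ ‖π₀‖. -/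
noncomputable section

open scoped RealInnerProductSpace

/-!
A point `(w, ẇ, a, γ)` of the fiber has `a = 0` because `w ≠ 0`, and pairing `ẇ + γw = π₀` with
`w` gives `γ = π₀·w`, hence `ẇ = π₀ − (π₀·w)w`: the point is determined by `w ∈ S²`. Its
`γ`-values are therefore the values of `w ↦ π₀·w` on the sphere, a connected set, so by
Cauchy–Schwarz and the intermediate value theorem they fill `[−‖π₀‖, ‖π₀‖]`.
-/

open Metric in
theorem image_inner_sphere_eq_Icc {E : Type*} [NormedAddCommGroup E] [InnerProductSpace ℝ E]
    (hE : 1 < Module.rank ℝ E) (p : E) :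
    (fun w => ⟪p, w⟫) '' sphere 0 1 = Set.Icc (-‖p‖) ‖p‖ := by
  refine Set.Subset.antisymm ?_ ?_
  · rintro _ ⟨w, hw, rfl⟩
    rw [mem_sphere_zero_iff_norm] at hw
    simpa [← abs_le, hw] using abs_real_inner_le_norm p w
  · have hsphere := isConnected_sphere hE (0 : E) zero_le_one
    have hconn : IsPreconnected ((fun w => ⟪p, w⟫) '' sphere (0 : E) 1) :=
      (hsphere.image _ (continuous_const.inner continuous_id).continuousOn).isPreconnected
    obtain ⟨u, hu, hpu⟩ : ∃ u ∈ sphere (0 : E) 1, ⟪p, u⟫ = ‖p‖ := by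
      rcases eq_or_ne p 0 with rfl | hp
      · obtain ⟨u, hu⟩ := hsphere.nonempty
        exact ⟨u, hu, by simp⟩
      · refine ⟨‖p‖⁻¹ • p, by simp [norm_smul, hp], ?_⟩
        rw [real_inner_smul_right, real_inner_self_eq_norm_sq]
        field_simp
    exact hconn.Icc_subset ⟨-u, by simpa using hu, by simp [hpu]⟩ ⟨u, hu, hpu⟩

def sphereToFiber (pi0 w : E3) : E3 × E3 × ℝ × ℝ := (w, pi0 - ⟪pi0, w⟫ • w, 0, ⟪pi0, w⟫)

lemma sphereToFiber_mem {pi0 w : E3} (hw : ‖w‖ = 1) :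
    sphereToFiber pi0 w ∈ {x ∈ Phat | blowdown x = (pi0, 0)} := by
  refine ⟨⟨hw, ?_, le_rfl⟩, by simp [sphereToFiber, blowdown]⟩
  change ⟪w, pi0 - ⟪pi0, w⟫ • w⟫ = 0
  rw [inner_sub_right, real_inner_smul_right, real_inner_self_eq_norm_sq, hw, real_inner_comm]
  ring

lemma sphereToFiber_fst_of_mem {pi0 : E3} {x : E3 × E3 × ℝ × ℝ}
    (hx : x ∈ {x ∈ Phat | blowdown x = (pi0, 0)}) : sphereToFiber pi0 x.1 = x := by
  obtain ⟨w, dw, a, γ⟩ := x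
  obtain ⟨⟨hw, hdw, -⟩, hb⟩ := hx
  simp only [blowdown, Prod.mk.injEq] at hw hdw hb
  obtain ⟨rfl, ha⟩ := hb
  have hγ : ⟪dw + γ • w, w⟫ = γ := by
    rw [inner_add_left, real_inner_comm, hdw, real_inner_smul_left, real_inner_self_eq_norm_sq, hw]
    ring
  have ha : a = 0 := (smul_eq_zero.mp ha).resolve_right (norm_ne_zero_iff.mp (by simp [hw]))
  simp [sphereToFiber, hγ, ha]

lemma image_sphereToFiber (pi0 : E3) :
    sphereToFiber pi0 '' {w | ‖w‖ = 1} = {x ∈ Phat | blowdown x = (pi0, 0)} := by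
  refine Set.Subset.antisymm ?_ fun x hx => ⟨x.1, hx.1.1, sphereToFiber_fst_of_mem hx⟩
  rintro _ ⟨w, hw, rfl⟩
  exact sphereToFiber_mem hw

/-- the blow-up of the point (π,p) = (π₀,0) is a two-sphere:
w ↦ (w, π₀ − (π₀·w)w, 0, π₀·w) is a bijection from S² onto β⁻¹({(π₀,0)});
moreover the fiber meets {γ = c} if and only if |c| ≤ ‖π₀‖. -/
theorem statement9 (pi0 : E3) :
    Set.BijOn (fun w : E3 => (w, pi0 - ⟪pi0, w⟫ • w, (0 : ℝ), ⟪pi0, w⟫))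
      {w : E3 | ‖w‖ = 1} {x ∈ Phat | blowdown x = (pi0, 0)} ∧
    ∀ c : ℝ, (∃ x ∈ {x ∈ Phat | blowdown x = (pi0, 0)}, x.2.2.2 = c) ↔ |c| ≤ ‖pi0‖ := by
  have hinj : Set.InjOn (sphereToFiber pi0) {w | ‖w‖ = 1} := fun _ _ _ _ h => congrArg Prod.fst h
  refine ⟨image_sphereToFiber pi0 ▸ hinj.bijOn_image, fun c => ?_⟩
  have hrank : 1 < Module.rank ℝ E3 := by
    rw [← Module.finrank_eq_rank, finrank_euclideanSpace_fin]
    norm_num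
  have hγ : (fun w => ⟪pi0, w⟫) '' {w | ‖w‖ = 1} = Set.Icc (-‖pi0‖) ‖pi0‖ := by
    simpa [Metric.sphere, dist_eq_norm] using image_inner_sphere_eq_Icc hrank pi0
  rw [abs_le, ← Set.mem_Icc, ← hγ, ← image_sphereToFiber, Set.exists_mem_image]
  rfl
end
end

section
/- Let α_e ∈ ℝ, let w₀ ∈ ℝ³ with ‖w₀‖ = 1, and set ẇ₀ = α_e k − α_e (k·w₀) w₀, γ = α_e (k·w₀), a = 0. Let R(θ) ∈ SO(3) denote rotation by angle θ about the axis k. Then the curve t ↦ ( R(−α_e t/I₃) w₀, R(−α_e t/I₃) ẇ₀ ) is a solution of (8) with a = 0 and parameter γ; i.e. each point of the blown-up relative equilibrium set is a relative equilibrium with generator −α_e/I₃. In particular, the points (w,ẇ) = (k, 0) with γ = α_e and (w,ẇ) = (−k, 0) with γ = −α_e are equilibria of (8) with a = 0. -/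
noncomputable section

open scoped RealInnerProductSpace

/-- Rotation by angle θ about the axis k = (0,0,1). -/
def rotk (θ : ℝ) (v : E3) : E3 :=
  vec3 (Real.cos θ * v 0 - Real.sin θ * v 1) (Real.sin θ * v 0 + Real.cos θ * v 1) (v 2)

/-! Put `π = ẇ + γ w`. The given `ẇ₀` and `γ` make the `w₀`-terms cancel, so `π₀ = α_e k`.
Rotating `w₀` and `ẇ₀` about `k` keeps `π = α_e k` fixed, and then (8) with `a = 0` is the linear
equation `v' = v × (α_e/I₃) k` for both components, whose flow is `R(-α_e t/I₃)`.
The two equilibria are the cases `w₀ = ±k`, where `ẇ₀ = 0` and the rotation fixes `w₀`. -/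

@[simp] lemma vec3_apply_zero (x y z : ℝ) : vec3 x y z 0 = x := rfl
@[simp] lemma vec3_apply_one (x y z : ℝ) : vec3 x y z 1 = y := rfl
@[simp] lemma vec3_apply_two (x y z : ℝ) : vec3 x y z 2 = z := rfl

lemma E3.ext_fin3 {u v : E3} (h0 : u 0 = v 0) (h1 : u 1 = v 1) (h2 : u 2 = v 2) : u = v := by
  ext i; fin_cases i <;> assumption

lemma Iinv_smul_kvec (I1 I2 I3 c : ℝ) : Iinv I1 I2 I3 (c • kvec) = (c / I3) • kvec := by
  apply E3.ext_fin3 <;> simp [Iinv, kvec]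

lemma rotk_add (θ : ℝ) (u v : E3) : rotk θ (u + v) = rotk θ u + rotk θ v := by
  apply E3.ext_fin3 <;> simp [rotk] <;> ring

lemma rotk_smul (θ c : ℝ) (u : E3) : rotk θ (c • u) = c • rotk θ u := by
  apply E3.ext_fin3 <;> simp [rotk] <;> ring

@[simp] lemma rotk_zero (θ : ℝ) : rotk θ 0 = 0 := by
  simpa using rotk_smul θ 0 0

@[simp] lemma rotk_kvec (θ : ℝ) : rotk θ kvec = kvec := by
  apply E3.ext_fin3 <;> simp [rotk, kvec]

@[simp] lemma rotk_neg (θ : ℝ) (u : E3) : rotk θ (-u) = -rotk θ u := by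
  simpa using rotk_smul θ (-1) u

lemma rotk_eq_cos_smul_add_sin_smul (θ : ℝ) (v : E3) :
    rotk θ v =
      Real.cos θ • vec3 (v 0) (v 1) 0 + Real.sin θ • vec3 (-v 1) (v 0) 0 + vec3 0 0 (v 2) := by
  apply E3.ext_fin3 <;> simp [rotk] <;> ring

lemma hasDerivAt_rotk_mul (m : ℝ) (v : E3) (t : ℝ) :
    HasDerivAt (fun s => rotk (m * s) v) (cross3 (rotk (m * t) v) (-m • kvec)) t := by
  have hθ : HasDerivAt (fun s : ℝ => m * s) m t := by
    simpa using (hasDerivAt_id t).const_mul m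
  simp_rw [rotk_eq_cos_smul_add_sin_smul]
  refine ((((Real.hasDerivAt_cos _).comp t hθ).smul_const _).add
    (((Real.hasDerivAt_sin _).comp t hθ).smul_const _)).add_const _ |>.congr_deriv ?_
  apply E3.ext_fin3 <;> simp [cross3, kvec] <;> ring

theorem isSol8_rotk_of_add_smul_eq_smul_kvec (I1 I2 I3 M1 M2 M3 γ c : ℝ) {w0 dw0 : E3}
    (h : dw0 + γ • w0 = c • kvec) :
    IsSol8 I1 I2 I3 M1 M2 M3 0 γ
      (fun t => rotk (-(c / I3) * t) w0) (fun t => rotk (-(c / I3) * t) dw0) := by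
  have hsum (t : ℝ) : rotk (-(c / I3) * t) dw0 + γ • rotk (-(c / I3) * t) w0 = c • kvec := by
    rw [← rotk_smul, ← rotk_add, h, rotk_smul, rotk_kvec]
  refine ⟨fun t => ?_, fun t => ?_⟩
  · rw [hsum t, Iinv_smul_kvec]
    simpa using hasDerivAt_rotk_mul (-(c / I3)) w0 t
  · rw [hsum t, Iinv_smul_kvec]
    simpa using hasDerivAt_rotk_mul (-(c / I3)) dw0 t

theorem statement11_general (I1 I2 I3 M1 M2 M3 : ℝ)
    (αe : ℝ) (w0 : E3)
    (dw0 : E3) (hdw0 : dw0 = αe • kvec - (αe * ⟪kvec, w0⟫) • w0)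
    (γ : ℝ) (hγ : γ = αe * ⟪kvec, w0⟫) :
    IsSol8 I1 I2 I3 M1 M2 M3 0 γ
      (fun t => rotk (-(αe / I3) * t) w0) (fun t => rotk (-(αe / I3) * t) dw0) ∧
    IsSol8 I1 I2 I3 M1 M2 M3 0 αe (fun _ => kvec) (fun _ => (0 : E3)) ∧
    IsSol8 I1 I2 I3 M1 M2 M3 0 (-αe) (fun _ => -kvec) (fun _ => (0 : E3)) := by
  refine ⟨isSol8_rotk_of_add_smul_eq_smul_kvec _ _ _ _ _ _ _ _ (by rw [hdw0, hγ]; abel), ?_, ?_⟩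
  · simpa using isSol8_rotk_of_add_smul_eq_smul_kvec I1 I2 I3 M1 M2 M3 αe αe
      (w0 := kvec) (dw0 := 0) (by simp)
  · simpa using isSol8_rotk_of_add_smul_eq_smul_kvec I1 I2 I3 M1 M2 M3 (-αe) αe
      (w0 := -kvec) (dw0 := 0) (by simp)

/-- each point of the blown-up relative equilibrium set is a
relative equilibrium of (8) (with a = 0) with generator −α_e/I₃: the curve
t ↦ (R(−α_e t/I₃)w₀, R(−α_e t/I₃)ẇ₀) is a solution. In particular (k,0) with
γ = α_e and (−k,0) with γ = −α_e are equilibria. -/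
theorem statement11 (I1 I2 I3 M1 M2 M3 : ℝ)
    (hI1 : 0 < I1) (hI2 : 0 < I2) (hI3 : 0 < I3)
    (hM1 : 0 < M1) (hM2 : 0 < M2) (hM3 : 0 < M3)
    (αe : ℝ) (w0 : E3) (hw0 : ‖w0‖ = 1)
    (dw0 : E3) (hdw0 : dw0 = αe • kvec - (αe * ⟪kvec, w0⟫) • w0)
    (γ : ℝ) (hγ : γ = αe * ⟪kvec, w0⟫) :
    IsSol8 I1 I2 I3 M1 M2 M3 0 γ
      (fun t => rotk (-(αe / I3) * t) w0) (fun t => rotk (-(αe / I3) * t) dw0) ∧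
    IsSol8 I1 I2 I3 M1 M2 M3 0 αe (fun _ => kvec) (fun _ => (0 : E3)) ∧
    IsSol8 I1 I2 I3 M1 M2 M3 0 (-αe) (fun _ => -kvec) (fun _ => (0 : E3)) :=
  statement11_general I1 I2 I3 M1 M2 M3 αe w0 dw0 hdw0 γ hγ
end
end

section
/- Let I₁, I₂, I₃ be positive reals with either I₃ > max(I₁, I₂) or I₃ < min(I₁, I₂), and let α_e ∈ ℝ. Then π = α_e k is a Lyapunov stable equilibrium of the rigid-body (Euler) equation dπ/dt = π×(𝐈⁻¹π) on ℝ³: for every ε > 0 there exists δ > 0 such that every solution with ‖π(0) − α_e k‖ < δ satisfies ‖π(t) − α_e k‖ < ε for all t ≥ 0. -/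
/-!
Along a solution of Euler's equation both ‖π‖² and the energy ⟪π, 𝐈⁻¹π⟫ are conserved, hence so is
`(1/I₁ - 1/I₃) π₁² + (1/I₂ - 1/I₃) π₂²`, which is definite exactly when `I₃` is the largest or the
smallest moment of inertia. It keeps the equatorial part `π₁² + π₂²` of order `δ²` for all time, and
then conservation of ‖π‖² confines `π₃²` to within `O(δ)` of `α_e²`. Since `π₃` moves continuously
and starts near `α_e`, it cannot jump to the other branch near `-α_e`.
-/

noncomputable section

open scoped RealInnerProductSpace

open Filter Topology

def IsEulerSol (I1 I2 I3 : ℝ) (pm : ℝ → E3) : Prop :=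
  ∀ t : ℝ, HasDerivAt pm (cross3 (pm t) (Iinv I1 I2 I3 (pm t))) t

def diagQuad (c0 c1 c2 : ℝ) (p : E3) : ℝ := c0 * p 0 ^ 2 + c1 * p 1 ^ 2 + c2 * p 2 ^ 2

theorem norm_sub_smul_kvec_sq (p : E3) (α : ℝ) :
    ‖p - α • kvec‖ ^ 2 = p 0 ^ 2 + p 1 ^ 2 + (p 2 - α) ^ 2 := by
  rw [EuclideanSpace.norm_eq, Real.sq_sqrt (by positivity)]
  simp [Fin.sum_univ_three, kvec, vec3]

namespace IsEulerSol

variable {I1 I2 I3 : ℝ} {pm : ℝ → E3}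

theorem continuous (h : IsEulerSol I1 I2 I3 pm) : Continuous pm :=
  continuous_iff_continuousAt.mpr fun t => (h t).continuousAt

/-- Along the flow, `d/dt Σ cᵢ πᵢ² = 2 π₁ π₂ π₃` times the left side of `hc`. -/
theorem diagQuad_eq {c0 c1 c2 : ℝ} (h : IsEulerSol I1 I2 I3 pm)
    (hc : c0 * (1 / I3 - 1 / I2) + c1 * (1 / I1 - 1 / I3) + c2 * (1 / I2 - 1 / I1) = 0)
    (t : ℝ) : diagQuad c0 c1 c2 (pm t) = diagQuad c0 c1 c2 (pm 0) := by
  have hcoord (i : Fin 3) (τ : ℝ) :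
      HasDerivAt (fun τ => pm τ i) (cross3 (pm τ) (Iinv I1 I2 I3 (pm τ)) i) τ := by
    exact (EuclideanSpace.proj i).hasFDerivAt.comp_hasDerivAt τ (h τ)
  have hderiv (τ : ℝ) : HasDerivAt (fun τ => diagQuad c0 c1 c2 (pm τ)) 0 τ := by
    refine ((((hcoord 0 τ).pow 2).const_mul c0).add (((hcoord 1 τ).pow 2).const_mul c1)
      |>.add (((hcoord 2 τ).pow 2).const_mul c2)).congr_deriv ?_
    simp only [cross3, Iinv, vec3, WithLp.equiv_symm_apply, PiLp.toLp_apply, Matrix.cons_val,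
      Matrix.cons_val_one, Matrix.cons_val_zero, Nat.cast_ofNat, Nat.add_one_sub_one, pow_one]
    linear_combination (2 * pm τ 0 * pm τ 1 * pm τ 2) * hc
  exact is_const_of_deriv_eq_zero (fun τ => (hderiv τ).differentiableAt)
    (fun τ => (hderiv τ).deriv) t 0

end IsEulerSol

theorem exists_pos_weights_of_extreme_axis {I1 I2 I3 : ℝ} (hI1 : 0 < I1) (hI2 : 0 < I2)
    (hI3 : 0 < I3) (hord : I3 > max I1 I2 ∨ I3 < min I1 I2) :
    ∃ a b : ℝ, 0 < a ∧ 0 < b ∧ a * (1 / I3 - 1 / I2) + b * (1 / I1 - 1 / I3) = 0 := by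
  obtain ⟨s, ha, hb⟩ : ∃ s : ℝ, 0 < s * (1 / I1 - 1 / I3) ∧ 0 < s * (1 / I2 - 1 / I3) := by
    rcases hord with h | h
    · have h1 := one_div_lt_one_div_of_lt hI1 (lt_of_le_of_lt (le_max_left _ _) h)
      have h2 := one_div_lt_one_div_of_lt hI2 (lt_of_le_of_lt (le_max_right _ _) h)
      exact ⟨1, by linarith, by linarith⟩
    · have h1 := one_div_lt_one_div_of_lt hI3 (lt_of_lt_of_le h (min_le_left _ _))
      have h2 := one_div_lt_one_div_of_lt hI3 (lt_of_lt_of_le h (min_le_right _ _))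
      exact ⟨-1, by linarith, by linarith⟩
  exact ⟨_, _, ha, hb, by ring⟩

theorem sq_add_sq_le_of_weighted_eq {a b x y x₀ y₀ : ℝ} (ha : 0 < a) (hb : 0 < b)
    (h : a * x ^ 2 + b * y ^ 2 = a * x₀ ^ 2 + b * y₀ ^ 2) :
    x ^ 2 + y ^ 2 ≤ max a b / min a b * (x₀ ^ 2 + y₀ ^ 2) := by
  rw [div_mul_eq_mul_div, le_div_iff₀ (lt_min ha hb)]
  nlinarith [min_le_left a b, min_le_right a b, le_max_left a b, le_max_right a b,
    sq_nonneg x, sq_nonneg y, sq_nonneg x₀, sq_nonneg y₀]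

theorem abs_sub_le_of_abs_sq_sub_sq_le {X : Type*} [TopologicalSpace X] [PreconnectedSpace X]
    {f : X → ℝ} (hf : Continuous f) {α θ : ℝ} (hθ : 0 ≤ θ)
    (hsq : ∀ x, |f x ^ 2 - α ^ 2| ≤ θ ^ 2) {x₀ : X} (hx₀ : |f x₀ - α| ≤ θ) (x : X) :
    |f x - α| ≤ 3 * θ := by
  have hbranch (x : X) : |f x - α| ≤ θ ∨ |f x + α| ≤ θ := by
    by_contra! hcon
    have := mul_lt_mul'' hcon.1 hcon.2 hθ hθ
    rw [← abs_mul, show (f x - α) * (f x + α) = f x ^ 2 - α ^ 2 by ring] at this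
    nlinarith [hsq x]
  rcases le_or_gt |α| θ with hαθ | hαθ
  · rcases hbranch x with h | h
    · linarith
    · obtain ⟨h1, h2⟩ := abs_le.mp h
      obtain ⟨h3, h4⟩ := abs_le.mp hαθ
      exact abs_le.mpr ⟨by linarith, by linarith⟩
  -- the two branches are separated, so the branch through `x₀` is clopen
  have hsep (x : X) : |f x - α| ≤ θ ↔ θ < |f x + α| := by
    refine ⟨fun h => ?_, fun h => (hbranch x).resolve_right h.not_ge⟩
    by_contra! h'
    obtain ⟨h1, h2⟩ := abs_le.mp h
    obtain ⟨h3, h4⟩ := abs_le.mp h'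
    rcases abs_cases α with ⟨hα, -⟩ | ⟨hα, -⟩ <;> linarith
  have hclopen : IsClopen {x | |f x - α| ≤ θ} := by
    refine ⟨isClosed_le (by fun_prop) continuous_const, ?_⟩
    simp_rw [hsep]
    exact isOpen_lt continuous_const (by fun_prop)
  have := hclopen.eq_univ ⟨x₀, hx₀⟩ ▸ Set.mem_univ x
  exact this.trans (by linarith)

theorem IsEulerSol.norm_sub_smul_kvec_sq_le {I1 I2 I3 : ℝ} {pm : ℝ → E3}
    (h : IsEulerSol I1 I2 I3 pm) {a b : ℝ} (ha : 0 < a) (hb : 0 < b)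
    (hab : a * (1 / I3 - 1 / I2) + b * (1 / I1 - 1 / I3) = 0) {α δ : ℝ}
    (h0 : ‖pm 0 - α • kvec‖ < δ) (t : ℝ) :
    ‖pm t - α • kvec‖ ^ 2 ≤
      max a b / min a b * δ ^ 2 + 9 * ((2 + max a b / min a b) * δ ^ 2 + 2 * |α| * δ) := by
  set K := max a b / min a b
  set η := (2 + K) * δ ^ 2 + 2 * |α| * δ
  have hK : 0 ≤ K := (div_pos (lt_max_of_lt_left ha) (lt_min ha hb)).le
  have hδ : 0 < δ := (norm_nonneg _).trans_lt h0
  have hη : δ ^ 2 ≤ η := by nlinarith [abs_nonneg α]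
  have h0sq : pm 0 0 ^ 2 + pm 0 1 ^ 2 + (pm 0 2 - α) ^ 2 < δ ^ 2 :=
    norm_sub_smul_kvec_sq (pm 0) α ▸ pow_lt_pow_left₀ h0 (norm_nonneg _) two_ne_zero
  have hz0 : |pm 0 2 - α| < δ :=
    abs_lt_of_sq_lt_sq (by nlinarith [sq_nonneg (pm 0 0), sq_nonneg (pm 0 1)]) hδ.le
  have hequator (s : ℝ) : pm s 0 ^ 2 + pm s 1 ^ 2 ≤ K * δ ^ 2 := by
    have henergy := h.diagQuad_eq (c0 := a) (c1 := b) (c2 := 0) (by linear_combination hab) s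
    simp only [diagQuad, zero_mul, add_zero] at henergy
    exact (sq_add_sq_le_of_weighted_eq ha hb henergy).trans
      (mul_le_mul_of_nonneg_left (by nlinarith [sq_nonneg (pm 0 2 - α)]) hK)
  have hzsq (s : ℝ) : |pm s 2 ^ 2 - α ^ 2| ≤ √η ^ 2 := by
    have hnorm := h.diagQuad_eq (c0 := 1) (c1 := 1) (c2 := 1) (by ring) s
    simp only [diagQuad, one_mul] at hnorm
    have hcross : |2 * α * (pm 0 2 - α)| ≤ 2 * |α| * δ := by
      rw [abs_mul, abs_mul, abs_two]
      gcongr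
    obtain ⟨h1, h2⟩ := abs_le.mp hcross
    rw [Real.sq_sqrt (hη.trans' (sq_nonneg δ))]
    refine abs_le.mpr ⟨?_, ?_⟩ <;>
      nlinarith [hequator s, sq_nonneg (pm s 0), sq_nonneg (pm s 1), sq_nonneg (pm 0 0),
        sq_nonneg (pm 0 1)]
  have hz : |pm t 2 - α| ≤ 3 * √η :=
    abs_sub_le_of_abs_sq_sub_sq_le (f := fun s => pm s 2)
      ((EuclideanSpace.proj 2).continuous.comp h.continuous) (Real.sqrt_nonneg η) hzsq
      (Real.abs_le_sqrt (by nlinarith [sq_abs (pm 0 2 - α)])) t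
  have hz' : (pm t 2 - α) ^ 2 ≤ 9 * η := by
    have := pow_le_pow_left₀ (abs_nonneg _) hz 2
    rwa [sq_abs, mul_pow, Real.sq_sqrt (hη.trans' (sq_nonneg δ)), show (3 : ℝ) ^ 2 = 9 by norm_num]
      at this
  rw [norm_sub_smul_kvec_sq]
  linarith [hequator t]

/-- rotation about a long or short axis: π = α_e k is a Lyapunov
stable equilibrium of the Euler equation dπ/dt = π×(𝐈⁻¹π) when I₃ is not the
intermediate moment of inertia. -/
theorem statement19 (I1 I2 I3 : ℝ) (hI1 : 0 < I1) (hI2 : 0 < I2) (hI3 : 0 < I3)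
    (hord : I3 > max I1 I2 ∨ I3 < min I1 I2) (αe : ℝ) :
    ∀ ε > 0, ∃ δ > 0, ∀ pm : ℝ → E3,
      (∀ t : ℝ, HasDerivAt pm (cross3 (pm t) (Iinv I1 I2 I3 (pm t))) t) →
      ‖pm 0 - αe • kvec‖ < δ →
      ∀ t ≥ 0, ‖pm t - αe • kvec‖ < ε := by
  intro ε hε
  obtain ⟨a, b, ha, hb, hab⟩ := exists_pos_weights_of_extreme_axis hI1 hI2 hI3 hord
  set K := max a b / min a b
  have hbound : Tendsto (fun δ : ℝ => K * δ ^ 2 + 9 * ((2 + K) * δ ^ 2 + 2 * |αe| * δ))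
      (𝓝[>] 0) (𝓝 0) := by
    refine Tendsto.mono_left ?_ nhdsWithin_le_nhds
    simpa using ((by fun_prop : Continuous
      fun δ : ℝ => K * δ ^ 2 + 9 * ((2 + K) * δ ^ 2 + 2 * |αe| * δ)).tendsto 0)
  obtain ⟨δ, hδε, hδ⟩ :=
    ((hbound.eventually (gt_mem_nhds (pow_pos hε 2))).and self_mem_nhdsWithin).exists
  refine ⟨δ, hδ, fun pm hpm h0 t _ => ?_⟩
  have := (IsEulerSol.norm_sub_smul_kvec_sq_le hpm ha hb hab h0 t).trans_lt hδε
  exact lt_of_pow_lt_pow_left₀ 2 hε.le this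
end
end
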